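/- Let 𝓕 be a hereditary family of finite subsets of ℕ covering ℕ which is not precompact. Then there exists an infinite A ⊆ ℕ such that every finite subset of A belongs to 𝓕; consequently Φ_𝓕(P_A x) = Σ_{i∈A} |x i| for every x : ℕ → ℝ, and there exists τ : ℕ → (0,∞) such that 𝓘_{𝓕,τ} is a proper tall F_σ ideal (proper: ℕ ∉ 𝓘_{𝓕,τ}; tall: every infinite subset of ℕ contains an infinite member of 𝓘_{𝓕,τ}); in particular 𝓘_{𝓕,τ} is F_σ and not a trivial modification of Fin. -/

import Mathlib

open Filter Topology ENNReal

open Classical in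
/-- The characteristic function of a set of naturals, as an element of the Cantor space. -/
noncomputable def chi (A : Set ℕ) : ℕ → Bool := fun n => decide (n ∈ A)

/-- A set in the Cantor space is F_σ if it is a countable union of closed sets. -/
def IsFsigma (S : Set (ℕ → Bool)) : Prop :=
  ∃ C : ℕ → Set (ℕ → Bool), (∀ n, IsClosed (C n)) ∧ S = ⋃ n, C n

/-- `𝓕` is precompact: every member of the closure of `𝓕` in the Cantor space is finite. -/
def Precompact (𝓕 : Set (Set ℕ)) : Prop :=
  ∀ g ∈ closure (chi '' 𝓕), {n | g n = true}.Finite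

/-- `φ_{𝓕,τ}(A) = sup_{F ∈ 𝓕} Σ_{i ∈ F ∩ A} τ i`. -/
noncomputable def phiFam (𝓕 : Set (Set ℕ)) (τ : ℕ → ℝ) (A : Set ℕ) : ℝ≥0∞ :=
  ⨆ F ∈ 𝓕, ∑' i : ↥(F ∩ A), ENNReal.ofReal (τ i)

/-- The `𝓕`-ideal `𝓘_{𝓕,τ} = Exh(φ_{𝓕,τ})`. -/
def idealFam (𝓕 : Set (Set ℕ)) (τ : ℕ → ℝ) : Set (Set ℕ) :=
  {A | Tendsto (fun n : ℕ => phiFam 𝓕 τ (A \ Set.Iio n)) atTop (𝓝 0)}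

/-- `Φ_𝓕(x) = sup_{F ∈ 𝓕} Σ_{i ∈ F} |x i|`. -/
noncomputable def PhiFam (𝓕 : Set (Set ℕ)) (x : ℕ → ℝ) : ℝ≥0∞ :=
  ⨆ F ∈ 𝓕, ∑' i : F, ENNReal.ofReal |x i|


section Helpers
open Set

lemma tsum_sub_mono (f : ℕ → ℝ≥0∞) {S T : Set ℕ} (h : S ⊆ T) :
    ∑' (i : ↥S), f i ≤ ∑' (i : ↥T), f i := by
  rw [tsum_subtype, tsum_subtype]
  exact ENNReal.tsum_le_tsum (fun i => Set.indicator_le_indicator_of_subset h (fun _ => zero_le) i)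

lemma tsum_sub_union_le (f : ℕ → ℝ≥0∞) (S T : Set ℕ) :
    ∑' (i : ↥(S ∪ T)), f i ≤ ∑' (i : ↥S), f i + ∑' (i : ↥T), f i := by
  rw [tsum_subtype, tsum_subtype, tsum_subtype, ← ENNReal.tsum_add]
  refine ENNReal.tsum_le_tsum (fun i => ?_)
  by_cases hS : i ∈ S
  · simp [Set.indicator_of_mem, hS, Set.indicator_of_mem (Set.mem_union_left _ hS)]
  by_cases hT : i ∈ T
  · simp [Set.indicator_of_mem hT, Set.indicator_of_notMem hS,
      Set.indicator_of_mem (Set.mem_union_right _ hT)]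
  · simp [Set.indicator_of_notMem hS, Set.indicator_of_notMem hT,
      Set.indicator_of_notMem (fun h' => h'.elim hS hT : i ∉ S ∪ T)]

lemma tsum_tail_tendsto (f : ℕ → ℝ≥0∞) (S : Set ℕ) (h : ∑' (i : ↥S), f i ≠ ⊤) :
    Tendsto (fun n : ℕ => ∑' (i : ↥(S \ Set.Iio n)), f i) atTop (𝓝 0) := by
  set g : ℕ → ℝ≥0∞ := Set.indicator S f with hg
  have hgt : ∑' i, g i ≠ ⊤ := by rwa [tsum_subtype] at h
  have hb : ∀ n : ℕ, ∑' (i : ↥(S \ Set.Iio n)), f i ≤ ∑' i, g (i + n) := by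
    intro n
    rw [tsum_subtype]
    have hinj : Function.Injective (fun k : ℕ => k + n) := add_left_injective n
    have hsupp : Function.support (Set.indicator (S \ Set.Iio n) f)
        ⊆ Set.range (fun k : ℕ => k + n) := by
      intro i hi
      rcases Set.mem_of_indicator_ne_zero hi with ⟨_, hge⟩
      simp only [Set.mem_Iio, not_lt] at hge
      exact ⟨i - n, show i - n + n = i by omega⟩
    rw [← hinj.tsum_eq hsupp]
    refine ENNReal.tsum_le_tsum (fun i => ?_)
    by_cases hm : (i + n) ∈ S \ Set.Iio n
    · rw [Set.indicator_of_mem hm, hg, Set.indicator_of_mem hm.1]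
    · simp [Set.indicator_of_notMem hm]
  refine tendsto_of_tendsto_of_tendsto_of_le_of_le tendsto_const_nhds
    (ENNReal.tendsto_sum_nat_add g hgt) (fun n => zero_le) hb

lemma tsum_tail_top (f : ℕ → ℝ≥0∞) (hf : ∀ i, f i ≠ ⊤) (S : Set ℕ)
    (h : ∑' (i : ↥S), f i = ⊤) (n : ℕ) :
    ∑' (i : ↥(S \ Set.Iio n)), f i = ⊤ := by
  by_contra hne
  have hsplit : ∑' (i : ↥S), f i ≤ ∑' (i : ↥(S ∩ Set.Iio n)), f i + ∑' (i : ↥(S \ Set.Iio n)), f i := by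
    refine le_trans (tsum_sub_mono f ?_) (tsum_sub_union_le f _ _)
    intro i hi
    by_cases hlt : i < n
    · exact Or.inl ⟨hi, hlt⟩
    · exact Or.inr ⟨hi, hlt⟩
  have hfin : ∑' (i : ↥(S ∩ Set.Iio n)), f i ≠ ⊤ := by
    have h1 : ∑' (i : ↥(S ∩ Set.Iio n)), f i ≤ ∑' i, Set.indicator (Set.Iio n) f i := by
      rw [tsum_subtype]
      exact ENNReal.tsum_le_tsum (fun i =>
        Set.indicator_le_indicator_of_subset Set.inter_subset_right (fun _ => zero_le) i)
    have h2 : ∑' i, Set.indicator (Set.Iio n) f i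
        = ∑ i ∈ Finset.range n, Set.indicator (Set.Iio n) f i :=
      tsum_eq_sum (fun i hi => Set.indicator_of_notMem (by simpa using hi) _)
    have h3 : ∑ i ∈ Finset.range n, Set.indicator (Set.Iio n) f i ≠ ⊤ := by
      refine (ENNReal.sum_lt_top.mpr (fun i _ => ?_)).ne
      exact lt_of_le_of_lt (Set.indicator_le_self' (fun _ _ => zero_le) i) (hf i).lt_top
    exact ne_top_of_le_ne_top (h2 ▸ h3) h1
  rw [h] at hsplit
  exact (ENNReal.add_ne_top.mpr ⟨hfin, hne⟩) (top_le_iff.mp hsplit)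


lemma tsum_sub_le_of_forall_finset (g : ℕ → ℝ≥0∞) (T : Set ℕ) (M : ℝ≥0∞)
    (h : ∀ S : Set ℕ, S.Finite → S ⊆ T → ∑' (i : ↥S), g i ≤ M) :
    ∑' (i : ↥T), g i ≤ M := by
  rw [ENNReal.tsum_eq_iSup_sum]
  refine iSup_le (fun t => ?_)
  classical
  set F : Finset ℕ := t.map ⟨Subtype.val, Subtype.val_injective⟩ with hF
  have h1 : ∑ a ∈ t, g ↑a = ∑ i ∈ F, g i := by
    rw [hF, Finset.sum_map]; rfl
  have h2 : (↑F : Set ℕ) ⊆ T := by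
    intro i hi
    simp only [hF, Finset.coe_map, Set.mem_image, Finset.mem_coe] at hi
    rcases hi with ⟨a, _, rfl⟩
    exact a.2
  have h3 : ∑ i ∈ F, g i = ∑' (i : ↥(↑F : Set ℕ)), g i := (F.tsum_subtype g).symm
  rw [h1, h3]
  exact h (↑F) (F.finite_toSet) h2

open Classical in
lemma count_mono_pred (p q : ℕ → Prop) (h : ∀ n, p n → q n) (n : ℕ) :
    Nat.count p n ≤ Nat.count q n := by
  rw [Nat.count_eq_card_filter_range, Nat.count_eq_card_filter_range]
  exact Finset.card_le_card (Finset.monotone_filter_right _ (fun i _ hi => h i hi))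

lemma harmonic_top : ∑' k : ℕ, ENNReal.ofReal (1 / ((k : ℝ) + 1)) = ⊤ := by
  by_contra hne
  have hsum : Summable (fun k : ℕ => ((k : ℝ) + 1)⁻¹) := by
    have := ENNReal.summable_toReal hne
    refine this.congr (fun k => ?_)
    rw [ENNReal.toReal_ofReal (by positivity)]
    rw [one_div]
  refine Real.not_summable_natCast_inv ((summable_nat_add_iff 1).mp (hsum.congr (fun k => ?_)))
  push_cast
  rfl


lemma chi_eq_true_iff (B : Set ℕ) (n : ℕ) : chi B n = true ↔ n ∈ B := by
  simp [chi]

lemma chi_surj (g : ℕ → Bool) : chi {n | g n = true} = g := by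
  funext n
  by_cases h : g n = true
  · rw [(chi_eq_true_iff _ n).mpr h, h]
  · simp only [Bool.not_eq_true] at h
    rw [h]
    rw [← Bool.not_eq_true]
    rw [chi_eq_true_iff]
    simp [h]

lemma closure_extract (𝓕 : Set (Set ℕ)) (hher : ∀ F ∈ 𝓕, ∀ G ⊆ F, G ∈ 𝓕)
    (g : ℕ → Bool) (hg : g ∈ closure (chi '' 𝓕)) (F : Set ℕ)
    (hFfin : F.Finite) (hFA : F ⊆ {n | g n = true}) : F ∈ 𝓕 := by
  classical
  set t : Finset ℕ := hFfin.toFinset with ht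
  have hU : (Set.pi ↑t (fun i => {g i})) ∈ 𝓝 g := by
    refine set_pi_mem_nhds t.finite_toSet (fun i _ => ?_)
    rw [nhds_discrete]
    exact Filter.mem_pure.mpr rfl
  obtain ⟨h, hhU, hhs⟩ := mem_closure_iff_nhds.mp hg _ hU
  obtain ⟨G, hG, rfl⟩ := hhs
  refine hher G hG F (fun i hi => ?_)
  have hit : i ∈ (↑t : Set ℕ) := by simpa [ht] using hi
  have : chi G i = g i := hhU i hit
  have hgi : g i = true := hFA hi
  rw [hgi] at this
  exact (chi_eq_true_iff G i).mp this

lemma geom_ne_top : ∑' k : ℕ, ENNReal.ofReal ((1/2 : ℝ)^k) ≠ ⊤ := by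
  have h1 : ∀ k : ℕ, ENNReal.ofReal ((1/2 : ℝ)^k) = (2⁻¹ : ℝ≥0∞)^k := by
    intro k
    rw [ENNReal.ofReal_pow (by norm_num)]
    congr 1
    rw [one_div, ENNReal.ofReal_inv_of_pos (by norm_num)]
    norm_num
  simp_rw [h1]
  rw [ENNReal.tsum_geometric]
  refine ENNReal.inv_ne_top.mpr ?_
  have : (2⁻¹ : ℝ≥0∞) < 1 := by
    rw [ENNReal.inv_lt_one]
    exact one_lt_two
  exact (tsub_pos_of_lt this).ne'


open Classical in
noncomputable def tauA (A : Set ℕ) : ℕ → ℝ :=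
  fun n => if n ∈ A then 1/((Nat.count (· ∈ A) n : ℝ) + 1) else (1/2)^n

lemma tauA_pos (A : Set ℕ) (n : ℕ) : 0 < tauA A n := by
  unfold tauA
  split
  · positivity
  · positivity

open Classical in
lemma tauA_mem (A : Set ℕ) {n : ℕ} (h : n ∈ A) :
    tauA A n = 1/((Nat.count (· ∈ A) n : ℝ) + 1) := by
  unfold tauA
  split
  · rfl
  · exact absurd h ‹¬ _›

lemma tauA_not_mem (A : Set ℕ) {n : ℕ} (h : n ∉ A) : tauA A n = (1/2)^n := by
  unfold tauA
  split
  · exact absurd ‹_› h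
  · rfl

lemma sumA_top (A : Set ℕ) (hA : A.Infinite) :
    ∑' (i : ↥A), ENNReal.ofReal (tauA A i) = ⊤ := by
  classical
  have hp : (setOf (· ∈ A)).Infinite := hA
  have hmem : ∀ k, Nat.nth (· ∈ A) k ∈ A := fun k => Nat.nth_mem_of_infinite hp k
  set e : ℕ → ↥A := fun k => ⟨Nat.nth (· ∈ A) k, hmem k⟩ with he
  have hbij : Function.Bijective e := by
    constructor
    · intro a b hab
      exact (Nat.nth_strictMono hp).injective (congrArg Subtype.val hab)
    · rintro ⟨a, ha⟩
      exact ⟨Nat.count (· ∈ A) a, Subtype.ext (Nat.nth_count ha)⟩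
  have heq := Equiv.tsum_eq (Equiv.ofBijective e hbij) (fun i : ↥A => ENNReal.ofReal (tauA A i))
  rw [← heq]
  have hval : ∀ k, ENNReal.ofReal (tauA A ((Equiv.ofBijective e hbij) k))
      = ENNReal.ofReal (1 / ((k : ℝ) + 1)) := by
    intro k
    have h1 : ((Equiv.ofBijective e hbij) k : ℕ) = Nat.nth (· ∈ A) k := rfl
    rw [h1, tauA_mem A (hmem k), Nat.count_nth_of_infinite hp k]
  calc ∑' k, ENNReal.ofReal (tauA A ((Equiv.ofBijective e hbij) k))
      = ∑' k : ℕ, ENNReal.ofReal (1 / ((k : ℝ) + 1)) := tsum_congr hval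
    _ = ⊤ := harmonic_top

lemma off_ne_top (A S : Set ℕ) (hS : ∀ i ∈ S, i ∉ A) :
    ∑' (i : ↥S), ENNReal.ofReal (tauA A i) ≠ ⊤ := by
  have h0 := tsum_subtype S (fun n => ENNReal.ofReal (tauA A n))
  rw [h0]
  refine ne_top_of_le_ne_top geom_ne_top (ENNReal.tsum_le_tsum (fun i => ?_))
  by_cases hi : i ∈ S
  · rw [Set.indicator_of_mem hi, tauA_not_mem A (hS i hi)]
  · simp [Set.indicator_of_notMem hi]

lemma exists_sparse (A B : Set ℕ) (hB : B.Infinite) (hBA : B ⊆ A) :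
    ∃ C, C ⊆ B ∧ C.Infinite ∧ ∑' (i : ↥C), ENNReal.ofReal (tauA A i) ≠ ⊤ := by
  classical
  have hq : (setOf (· ∈ B)).Infinite := hB
  set c : ℕ → ℕ := fun j => Nat.nth (· ∈ B) (2^j) with hc
  have hcinj : Function.Injective c := by
    intro a b hab
    have := (Nat.nth_strictMono hq).injective hab
    exact Nat.pow_right_injective (le_refl 2) this
  have hcB : ∀ j, c j ∈ B := fun j => Nat.nth_mem_of_infinite hq (2^j)
  refine ⟨Set.range c, ?_, Set.infinite_range_of_injective hcinj, ?_⟩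
  · rintro _ ⟨j, rfl⟩; exact hcB j
  · have heq := Equiv.tsum_eq (Equiv.ofInjective c hcinj)
      (fun i : ↥(Set.range c) => ENNReal.ofReal (tauA A i))
    rw [← heq]
    refine ne_top_of_le_ne_top geom_ne_top (ENNReal.tsum_le_tsum (fun j => ?_))
    have h1 : ((Equiv.ofInjective c hcinj) j : ℕ) = c j := rfl
    rw [h1, tauA_mem A (hBA (hcB j))]
    refine ENNReal.ofReal_le_ofReal ?_
    have hcount : 2^j ≤ Nat.count (· ∈ A) (c j) := by
      have h2 : Nat.count (· ∈ B) (c j) = 2^j := Nat.count_nth_of_infinite hq (2^j)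
      have h3 : Nat.count (· ∈ B) (c j) ≤ Nat.count (· ∈ A) (c j) :=
        count_mono_pred _ _ (fun n hn => hBA hn) (c j)
      omega
    have hcast : ((2:ℝ))^j ≤ (Nat.count (· ∈ A) (c j) : ℝ) := by
      have := Nat.cast_le (α := ℝ).mpr hcount
      push_cast at this
      exact this
    rw [one_div, one_div, inv_pow]
    refine inv_anti₀ (by positivity) ?_
    linarith


lemma phi_le (𝓕 : Set (Set ℕ)) (τ : ℕ → ℝ) (B : Set ℕ) :
    phiFam 𝓕 τ B ≤ ∑' (i : ↥B), ENNReal.ofReal (τ i) := by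
  refine iSup₂_le (fun F hF => ?_)
  exact tsum_sub_mono (fun n => ENNReal.ofReal (τ n)) Set.inter_subset_right

lemma phi_ge (𝓕 : Set (Set ℕ)) (τ : ℕ → ℝ) (A B : Set ℕ)
    (h𝓕A : ∀ S : Set ℕ, S ⊆ A → S.Finite → S ∈ 𝓕) :
    ∑' (i : ↥(A ∩ B)), ENNReal.ofReal (τ i) ≤ phiFam 𝓕 τ B := by
  refine tsum_sub_le_of_forall_finset (fun n => ENNReal.ofReal (τ n)) (A ∩ B) (phiFam 𝓕 τ B) (fun S hSfin hS => ?_)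
  have hSF : S ∈ 𝓕 := h𝓕A S (hS.trans Set.inter_subset_left) hSfin
  have hSB : S ∩ B = S := Set.inter_eq_self_of_subset_left (hS.trans Set.inter_subset_right)
  refine le_iSup₂_of_le S hSF (le_of_eq ?_)
  rw [hSB]


lemma mem_ideal_iff (𝓕 : Set (Set ℕ)) (τ : ℕ → ℝ) (A : Set ℕ)
    (h𝓕A : ∀ S : Set ℕ, S ⊆ A → S.Finite → S ∈ 𝓕)
    (hoff : ∀ S : Set ℕ, (∀ i ∈ S, i ∉ A) → ∑' (i : ↥S), ENNReal.ofReal (τ i) ≠ ⊤)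
    (B : Set ℕ) :
    B ∈ idealFam 𝓕 τ ↔ ∑' (i : ↥(A ∩ B)), ENNReal.ofReal (τ i) ≠ ⊤ := by
  set w : ℕ → ℝ≥0∞ := fun n => ENNReal.ofReal (τ n) with hw
  constructor
  · intro hmem
    by_contra htop

    have hge : ∀ n : ℕ, (⊤ : ℝ≥0∞) ≤ phiFam 𝓕 τ (B \ Set.Iio n) := by
      intro n
      have heq : A ∩ (B \ Set.Iio n) = (A ∩ B) \ Set.Iio n := by
        ext i; simp only [Set.mem_inter_iff, Set.mem_diff]; tauto
      have h1 := phi_ge 𝓕 τ A (B \ Set.Iio n) h𝓕A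
      rw [heq] at h1
      rw [tsum_tail_top w (fun i => ENNReal.ofReal_ne_top) (A ∩ B) htop n] at h1
      exact h1
    have hev := (hmem.eventually (gt_mem_nhds (by norm_num : (0:ℝ≥0∞) < 1))).exists
    obtain ⟨n, hn⟩ := hev
    exact absurd (lt_of_le_of_lt (hge n) hn) (by simp)
  · intro hfin
    have ht1 := tsum_tail_tendsto w (A ∩ B) hfin
    have ht2 := tsum_tail_tendsto w (B \ A) (hoff (B \ A) (fun i hi => hi.2))
    have hbound : ∀ n : ℕ, phiFam 𝓕 τ (B \ Set.Iio n)
        ≤ ∑' (i : ↥((A ∩ B) \ Set.Iio n)), w i + ∑' (i : ↥((B \ A) \ Set.Iio n)), w i := by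
      intro n
      refine le_trans (phi_le 𝓕 τ _) (le_trans (tsum_sub_mono w ?_) (tsum_sub_union_le w _ _))
      intro i hi
      by_cases hiA : i ∈ A
      · exact Or.inl ⟨⟨hiA, hi.1⟩, hi.2⟩
      · exact Or.inr ⟨⟨hi.1, hiA⟩, hi.2⟩
    have hsum : Tendsto (fun n : ℕ => ∑' (i : ↥((A ∩ B) \ Set.Iio n)), w i
        + ∑' (i : ↥((B \ A) \ Set.Iio n)), w i) atTop (𝓝 0) := by
      have := ht1.add ht2
      simpa using this
    exact tendsto_of_tendsto_of_tendsto_of_le_of_le tendsto_const_nhds hsum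
      (fun n => zero_le) hbound


lemma PhiFam_indicator (𝓕 : Set (Set ℕ)) (A : Set ℕ)
    (h𝓕A : ∀ S : Set ℕ, S ⊆ A → S.Finite → S ∈ 𝓕) (x : ℕ → ℝ) :
    PhiFam 𝓕 (Set.indicator A x) = ∑' i : A, ENNReal.ofReal |x i| := by
  set f : ℕ → ℝ≥0∞ := fun n => ENNReal.ofReal |x n| with hf
  have hpt : ∀ n, ENNReal.ofReal |Set.indicator A x n| = Set.indicator A f n := by
    intro n
    by_cases hn : n ∈ A
    · rw [Set.indicator_of_mem hn, Set.indicator_of_mem hn]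
    · rw [Set.indicator_of_notMem hn, Set.indicator_of_notMem hn, abs_zero,
        ENNReal.ofReal_zero]
  refine le_antisymm ?_ ?_
  · refine iSup₂_le (fun F hF => ?_)
    calc ∑' (i : ↥F), ENNReal.ofReal |Set.indicator A x i|
        = ∑' (i : ↥F), Set.indicator A f i := tsum_congr (fun i => hpt i)
      _ = ∑' n, Set.indicator F (Set.indicator A f) n := tsum_subtype F (Set.indicator A f)
      _ = ∑' n, Set.indicator (F ∩ A) f n := by rw [Set.indicator_indicator]
      _ ≤ ∑' n, Set.indicator A f n := ENNReal.tsum_le_tsum (fun n =>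
          Set.indicator_le_indicator_of_subset Set.inter_subset_right (fun _ => zero_le) n)
      _ = ∑' (i : ↥A), f i := (tsum_subtype A f).symm
  · refine tsum_sub_le_of_forall_finset f A (PhiFam 𝓕 (Set.indicator A x))
      (fun S hSfin hS => ?_)
    refine le_iSup₂_of_le S (h𝓕A S hS hSfin) (le_of_eq ?_)
    refine tsum_congr (fun i => ?_)
    rw [hpt, Set.indicator_of_mem (hS i.2)]


open Classical in
lemma ideal_fsigma (I : Set (Set ℕ)) (A : Set ℕ) (τ : ℕ → ℝ)
    (hchar : ∀ B : Set ℕ, B ∈ I ↔ ∑' (i : ↥(A ∩ B)), ENNReal.ofReal (τ i) ≠ ⊤) :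
    IsFsigma (chi '' I) := by
  set term : ℕ → (ℕ → Bool) → ℝ≥0∞ :=
    fun i g => if g i = true ∧ i ∈ A then ENNReal.ofReal (τ i) else 0 with hterm
  have hrho : ∀ B : Set ℕ, ∑' i, term i (chi B) = ∑' (i : ↥(A ∩ B)), ENNReal.ofReal (τ i) := by
    intro B
    rw [tsum_subtype (A ∩ B) (fun n => ENNReal.ofReal (τ n))]
    refine tsum_congr (fun i => ?_)
    by_cases hi : i ∈ A ∩ B
    · rw [Set.indicator_of_mem hi, hterm]
      simp only
      rw [if_pos ⟨(chi_eq_true_iff B i).mpr hi.2, hi.1⟩]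
    · rw [Set.indicator_of_notMem hi, hterm]
      simp only
      rw [if_neg]
      rintro ⟨h1, h2⟩
      exact hi ⟨h2, (chi_eq_true_iff B i).mp h1⟩
  refine ⟨fun k => ⋂ s : Finset ℕ, {g | ∑ i ∈ s, term i g ≤ (k : ℝ≥0∞)}, ?_, ?_⟩
  · intro k
    refine isClosed_iInter (fun s => ?_)
    have hcont : Continuous (fun g : ℕ → Bool => ∑ i ∈ s, term i g) := by
      refine continuous_finset_sum s (fun i _ => ?_)
      exact Continuous.comp (g := fun b : Bool => if b = true ∧ i ∈ A then ENNReal.ofReal (τ i) else 0)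
        continuous_of_discreteTopology (continuous_apply i)
    exact isClosed_le hcont continuous_const
  · ext g
    simp only [Set.mem_image, Set.mem_iUnion, Set.mem_iInter, Set.mem_setOf_eq]
    constructor
    · rintro ⟨B, hB, rfl⟩
      have hne := (hchar B).mp hB
      rw [← hrho B] at hne
      obtain ⟨k, hk⟩ := ENNReal.exists_nat_gt hne
      exact ⟨k, fun s => le_trans (ENNReal.sum_le_tsum s) hk.le⟩
    · rintro ⟨k, hk⟩
      set B : Set ℕ := {n | g n = true} with hB
      refine ⟨B, ?_, chi_surj g⟩
      rw [hchar B, ← hrho B, chi_surj g]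
      refine ne_top_of_le_ne_top (by simp : (k : ℝ≥0∞) ≠ ⊤) ?_
      rw [ENNReal.tsum_eq_iSup_sum]
      exact iSup_le hk

end Helpers

theorem stmt9 (𝓕 : Set (Set ℕ))
    (hfin : ∀ F ∈ 𝓕, F.Finite) (hcov : ∀ n : ℕ, ∃ F ∈ 𝓕, n ∈ F)
    (hher : ∀ F ∈ 𝓕, ∀ G ⊆ F, G ∈ 𝓕)
    (hnpc : ¬ Precompact 𝓕) :
    ∃ A : Set ℕ, A.Infinite ∧
      (∀ F : Set ℕ, F ⊆ A → F.Finite → F ∈ 𝓕) ∧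
      (∀ x : ℕ → ℝ, PhiFam 𝓕 (Set.indicator A x) = ∑' i : A, ENNReal.ofReal |x i|) ∧
      ∃ τ : ℕ → ℝ, (∀ n, 0 < τ n) ∧
        (Set.univ : Set ℕ) ∉ idealFam 𝓕 τ ∧
        (∀ B : Set ℕ, B.Infinite → ∃ C, C ⊆ B ∧ C.Infinite ∧ C ∈ idealFam 𝓕 τ) ∧
        IsFsigma (chi '' idealFam 𝓕 τ) ∧
        ¬ ∃ X : Set ℕ, idealFam 𝓕 τ = {A : Set ℕ | (A ∩ X).Finite} := by
  classical
  have hnpc' : ∃ g ∈ closure (chi '' 𝓕), ¬ {n | g n = true}.Finite := by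
    by_contra h
    push_neg at h
    exact hnpc h
  obtain ⟨g, hgcl, hginf⟩ := hnpc'
  set A : Set ℕ := {n | g n = true} with hA'
  have hA : A.Infinite := hginf
  have h𝓕A : ∀ F : Set ℕ, F ⊆ A → F.Finite → F ∈ 𝓕 := fun F hFA hFfin =>
    closure_extract 𝓕 hher g hgcl F hFfin hFA
  have hoff : ∀ S : Set ℕ, (∀ i ∈ S, i ∉ A) → ∑' (i : ↥S), ENNReal.ofReal (tauA A i) ≠ ⊤ :=
    fun S hS => off_ne_top A S hS
  have hchar : ∀ B : Set ℕ, B ∈ idealFam 𝓕 (tauA A)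
      ↔ ∑' (i : ↥(A ∩ B)), ENNReal.ofReal (tauA A i) ≠ ⊤ :=
    mem_ideal_iff 𝓕 (tauA A) A h𝓕A hoff
  refine ⟨A, hA, h𝓕A, fun x => PhiFam_indicator 𝓕 A h𝓕A x, tauA A, tauA_pos A, ?_, ?_, ?_, ?_⟩
  · intro hmem
    refine ((hchar Set.univ).mp hmem) ?_
    rw [Set.inter_univ]
    exact sumA_top A hA
  · intro B hB
    by_cases hd : (B \ A).Infinite
    · refine ⟨B \ A, Set.diff_subset, hd, ?_⟩
      rw [hchar]
      exact hoff (A ∩ (B \ A)) (fun i hi => hi.2.2)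
    · have hBA : (B ∩ A).Infinite := by
        by_contra hfin'
        rw [Set.not_infinite] at hfin' hd
        refine hB ((hfin'.union hd).subset (fun i hi => ?_))
        by_cases h : i ∈ A
        · exact Or.inl ⟨hi, h⟩
        · exact Or.inr ⟨hi, h⟩
      obtain ⟨C, hCB, hCinf, hCsum⟩ := exists_sparse A (B ∩ A) hBA Set.inter_subset_right
      refine ⟨C, hCB.trans Set.inter_subset_left, hCinf, ?_⟩
      rw [hchar]
      exact ne_top_of_le_ne_top hCsum
        (tsum_sub_mono (fun n => ENNReal.ofReal (tauA A n)) Set.inter_subset_right)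
  · exact ideal_fsigma (idealFam 𝓕 (tauA A)) A (tauA A) hchar
  · rintro ⟨X, hX⟩
    have hAnot : A ∉ idealFam 𝓕 (tauA A) := by
      rw [hchar, Set.inter_self, not_not]
      exact sumA_top A hA
    have hAX : (A ∩ X).Infinite := by
      by_contra hfin'
      rw [Set.not_infinite] at hfin'
      exact hAnot (by rw [hX]; exact hfin')
    obtain ⟨C, hCAX, hCinf, hCsum⟩ := exists_sparse A (A ∩ X) hAX Set.inter_subset_left
    have hCmem : C ∈ idealFam 𝓕 (tauA A) := by
      rw [hchar]
      exact ne_top_of_le_ne_top hCsum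
        (tsum_sub_mono (fun n => ENNReal.ofReal (tauA A n)) Set.inter_subset_right)
    rw [hX] at hCmem
    simp only [Set.mem_setOf_eq] at hCmem
    have hCX : (C ∩ X) = C := Set.inter_eq_self_of_subset_left
      (hCAX.trans Set.inter_subset_right)
    rw [hCX] at hCmem
    exact hCinf hCmem
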